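/- arXiv:1311.3240 — 3 statements merged into one kernel-verified Lean document; each statement's English description precedes it below -/
import Mathlib

section
/- Let t ≥ 3 be an integer, let n₁,…,n_t be positive integers with n = n₁ + ⋯ + n_t, and let U₁,…,U_k be a partition of {1,…,t} into k nonempty sets. Let J = {i : |Uᵢ| ≥ 2} and suppose J is nonempty. For a nonempty set U ⊆ {1,…,t} write s(U) = Σ_{j∈U} n_j. Then ∏_{i∈J} ( s(Uᵢ)/|Uᵢ| )^{|Uᵢ| - 2} ≤ (n/t)^{t-2}. -/
open Finset

private lemma aux_term (t ci si : ℝ) (ht : 3 ≤ t) (cn a : ℕ) (hci : ci = (cn : ℝ))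
    (hc1 : 1 ≤ cn) (ha : a = cn - 2) (hct : ci ≤ t) (hsc : ci ≤ si) :
    (a : ℝ) * (si / ci) ≤ ((t - 2) * si - (ci - (a : ℝ)) * t + 2 * ci) / t := by
  have htpos : (0 : ℝ) < t := by linarith
  have hcpos : (0 : ℝ) < ci := by
    rw [hci]; exact_mod_cast hc1
  rw [mul_div_assoc' ((a : ℝ)) si ci, div_le_div_iff₀ hcpos htpos]
  by_cases h2 : 2 ≤ cn
  · have haR : (a : ℝ) = ci - 2 := by
      rw [ha, hci]; push_cast [Nat.cast_sub h2]; ring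
    have hc2 : (2 : ℝ) ≤ ci := by rw [hci]; exact_mod_cast h2
    rw [haR]
    nlinarith [mul_nonneg (sub_nonneg.2 hsc) (sub_nonneg.2 hct)]
  · have hcn1 : cn = 1 := by omega
    have hci1 : ci = 1 := by rw [hci, hcn1]; norm_num
    have hs1 : (1 : ℝ) ≤ si := hci1 ▸ hsc
    have haR : (a : ℝ) = 0 := by rw [ha, hcn1]; norm_num
    rw [haR, hci1]
    nlinarith

theorem partition_product_le (t k : ℕ) (ht : 3 ≤ t) (w : Fin t → ℕ)
    (hw : ∀ i, 0 < w i) (U : Fin k → Finset (Fin t))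
    (hne : ∀ i, (U i).Nonempty)
    (hdisj : ∀ i j, i ≠ j → Disjoint (U i) (U j))
    (hcover : ∀ v : Fin t, ∃ i, v ∈ U i)
    (hJ : (Finset.univ.filter (fun i : Fin k => 2 ≤ (U i).card)).Nonempty) :
    ∏ i ∈ Finset.univ.filter (fun i : Fin k => 2 ≤ (U i).card),
        ((∑ j ∈ U i, (w j : ℝ)) / ((U i).card : ℝ)) ^ ((U i).card - 2)
      ≤ ((∑ j, (w j : ℝ)) / (t : ℝ)) ^ (t - 2) := by
  classical
  set c : Fin k → ℕ := fun i => (U i).card with hc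
  set a : Fin k → ℕ := fun i => (U i).card - 2 with haa
  set S : Fin k → ℝ := fun i => ∑ j ∈ U i, (w j : ℝ) with hS
  set N : ℝ := ∑ j, (w j : ℝ) with hN
  set M : ℕ := ∑ i, a i with hM
  -- partition facts
  have huniv : Finset.univ.biUnion U = Finset.univ := by
    ext v
    simp only [Finset.mem_biUnion, Finset.mem_univ, iff_true, true_and]
    exact hcover v
  have hpd : ((Finset.univ : Finset (Fin k)) : Set (Fin k)).PairwiseDisjoint U :=
    fun i _ j _ hij => hdisj i j hij
  have hsum_parts : ∀ f : Fin t → ℝ, ∑ i, ∑ j ∈ U i, f j = ∑ j, f j := by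
    intro f
    rw [← Finset.sum_biUnion hpd, huniv]
  have hcsum : ∑ i, c i = t := by
    have := hsum_parts (fun _ => (1 : ℝ))
    simp only [Finset.sum_const, nsmul_eq_mul, mul_one] at this
    have : ((∑ i, c i : ℕ) : ℝ) = (t : ℝ) := by
      push_cast
      simpa [Finset.card_univ] using this
    exact_mod_cast this
  have hSsum : ∑ i, S i = N := hsum_parts (fun j => (w j : ℝ))
  have hc1 : ∀ i, 1 ≤ c i := fun i => Finset.card_pos.2 (hne i)
  have hct : ∀ i, c i ≤ t := by
    intro i
    calc c i ≤ Finset.univ.card := Finset.card_le_univ _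
    _ = t := by simp
  have hSc : ∀ i, (c i : ℝ) ≤ S i := by
    intro i
    have : ∀ j ∈ U i, (1 : ℝ) ≤ (w j : ℝ) := fun j _ => by exact_mod_cast hw j
    calc (c i : ℝ) = ∑ _j ∈ U i, (1 : ℝ) := by simp [hc]
      _ ≤ S i := Finset.sum_le_sum this
  have hSpos : ∀ i, 0 ≤ S i := fun i =>
    le_trans (by positivity) (hSc i)
  -- M + 2 ≤ t
  have hMt : M + 2 ≤ t := by
    obtain ⟨i0, hi0⟩ := hJ
    rw [Finset.mem_filter] at hi0
    have h2 : 2 ≤ c i0 := hi0.2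
    have e1 : M = a i0 + ∑ i ∈ Finset.univ.erase i0, a i :=
      (Finset.add_sum_erase _ a (Finset.mem_univ i0)).symm
    have e2 : ∑ i, c i = c i0 + ∑ i ∈ Finset.univ.erase i0, c i :=
      (Finset.add_sum_erase _ c (Finset.mem_univ i0)).symm
    have e3 : ∑ i ∈ Finset.univ.erase i0, a i ≤ ∑ i ∈ Finset.univ.erase i0, c i :=
      Finset.sum_le_sum fun i _ => Nat.sub_le _ _
    have e4 : a i0 = c i0 - 2 := rfl
    omega
  set r : ℝ := (t : ℝ) - 2 with hr
  have hrpos : (0 : ℝ) < r := by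
    have : (3 : ℝ) ≤ t := by exact_mod_cast ht
    rw [hr]; linarith
  have htpos : (0 : ℝ) < t := by positivity
  -- key termwise sum
  have hterm : ∀ i, (a i : ℝ) * (S i / c i)
      ≤ ((r) * S i - ((c i : ℝ) - (a i : ℝ)) * t + 2 * c i) / t := by
    intro i
    exact aux_term t (c i) (S i) (by exact_mod_cast ht) (c i) (a i) rfl (hc1 i) rfl
      (by exact_mod_cast hct i) (hSc i)
  have hsumterm : ∑ i, (a i : ℝ) * (S i / c i)
      ≤ (r * N - ((t : ℝ) - (M : ℝ)) * t + 2 * t) / t := by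
    calc ∑ i, (a i : ℝ) * (S i / c i)
        ≤ ∑ i, ((r) * S i - ((c i : ℝ) - (a i : ℝ)) * t + 2 * c i) / t :=
          Finset.sum_le_sum fun i _ => hterm i
      _ = (r * (∑ i, S i) - ((∑ i, (c i : ℝ)) - (∑ i, (a i : ℝ))) * t
            + 2 * (∑ i, (c i : ℝ))) / t := by
          rw [← Finset.sum_div]
          congr 1
          rw [Finset.sum_add_distrib, Finset.sum_sub_distrib, ← Finset.mul_sum,
            ← Finset.sum_mul, Finset.sum_sub_distrib, ← Finset.mul_sum]
      _ = (r * N - ((t : ℝ) - (M : ℝ)) * t + 2 * t) / t := by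
          rw [hSsum]
          have h1 : ∑ i, (c i : ℝ) = (t : ℝ) := by exact_mod_cast congrArg Nat.cast hcsum
          have h2 : ∑ i, (a i : ℝ) = (M : ℝ) := by push_cast [hM]; rfl
          rw [h1, h2]
  -- AM-GM setup on Option (Fin k)
  set W : Option (Fin k) → ℝ := fun o => o.elim ((r - M) / r) (fun i => (a i : ℝ) / r) with hW
  set Z : Option (Fin k) → ℝ := fun o => o.elim 1 (fun i => S i / c i) with hZ
  have hMr : (M : ℝ) ≤ r := by
    rw [hr]
    have : ((M : ℕ) : ℝ) + 2 ≤ (t : ℝ) := by exact_mod_cast hMt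
    linarith
  have hWnn : ∀ o ∈ (Finset.univ : Finset (Option (Fin k))), 0 ≤ W o := by
    rintro (_ | i) _
    · exact div_nonneg (by linarith) hrpos.le
    · exact div_nonneg (by positivity) hrpos.le
  have hWsum : ∑ o, W o = 1 := by
    rw [Fintype.sum_option]
    have : ∑ i, W (some i) = (M : ℝ) / r := by
      simp only [hW, Option.elim]
      rw [← Finset.sum_div]
      congr 1
      push_cast [hM]
      rfl
    have hn : W none = (r - (M : ℝ)) / r := rfl
    rw [this, hn]
    field_simp
    ring
  have hZnn : ∀ o ∈ (Finset.univ : Finset (Option (Fin k))), 0 ≤ Z o := by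
    rintro (_ | i) _
    · norm_num [hZ]
    · exact div_nonneg (hSpos i) (by positivity)
  have hamgm := Real.geom_mean_le_arith_mean_weighted Finset.univ W Z hWnn hWsum hZnn
  -- bound the arithmetic mean
  have hAM : ∑ o, W o * Z o ≤ N / t := by
    rw [Fintype.sum_option]
    have h1 : W none * Z none = (r - M) / r := by simp [hW, hZ]
    have h2 : ∑ i, W (some i) * Z (some i) = (1 / r) * ∑ i, (a i : ℝ) * (S i / c i) := by
      rw [Finset.mul_sum]
      apply Finset.sum_congr rfl
      intro i _
      simp only [hW, hZ, Option.elim]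
      ring
    rw [h1, h2]
    have hb : (1 / r) * ∑ i, (a i : ℝ) * (S i / c i)
        ≤ (1 / r) * ((r * N - ((t : ℝ) - (M : ℝ)) * t + 2 * t) / t) := by
      apply mul_le_mul_of_nonneg_left hsumterm (by positivity)
    have heq : (r - M) / r + (1 / r) * ((r * N - ((t : ℝ) - (M : ℝ)) * t + 2 * t) / t)
        = N / t := by
      field_simp
      ring
    linarith
  have hle : ∏ o, Z o ^ W o ≤ N / t := le_trans hamgm hAM
  have hprodnn : 0 ≤ ∏ o, Z o ^ W o :=
    Finset.prod_nonneg fun o ho => Real.rpow_nonneg (hZnn o ho) _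
  have hpow := Real.rpow_le_rpow hprodnn hle hrpos.le
  -- compute LHS of hpow
  have hLHS : (∏ o, Z o ^ W o) ^ r = ∏ i, (S i / c i) ^ (a i) := by
    rw [← Real.finset_prod_rpow _ _ (fun o ho => Real.rpow_nonneg (hZnn o ho) _) r]
    rw [Fintype.prod_option]
    have h1 : (Z none ^ W none) ^ r = 1 := by
      simp [hZ, Real.one_rpow]
    rw [h1, one_mul]
    apply Finset.prod_congr rfl
    intro i _
    have hz : 0 ≤ Z (some i) := hZnn (some i) (Finset.mem_univ _)
    have hWr : W (some i) * r = (a i : ℝ) := by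
      simp only [hW, Option.elim]
      field_simp
    rw [← Real.rpow_mul hz, hWr, Real.rpow_natCast]
    rfl
  -- compute RHS of hpow
  have hRHS : (N / t) ^ r = (N / t) ^ (t - 2) := by
    have : r = ((t - 2 : ℕ) : ℝ) := by
      rw [hr]; push_cast [Nat.cast_sub (by omega : 2 ≤ t)]; ring
    rw [this, Real.rpow_natCast]
  rw [hLHS, hRHS] at hpow
  -- restrict the product to the filter
  have hfinal : ∏ i ∈ Finset.univ.filter (fun i : Fin k => 2 ≤ (U i).card),
      ((∑ j ∈ U i, (w j : ℝ)) / ((U i).card : ℝ)) ^ ((U i).card - 2)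
      = ∏ i, (S i / c i) ^ (a i) := by
    apply Finset.prod_subset (Finset.filter_subset _ _)
    intro i _ hi
    rw [Finset.mem_filter] at hi
    push_neg at hi
    have h2 := hi (Finset.mem_univ i)
    have h0 : (U i).card - 2 = 0 := by omega
    rw [h0, pow_zero]
  rw [hfinal]
  exact hpow
end

section
/- Let t ≥ 1 be an integer, let c > 0 be a real number, and let p : {1,…,t} → [0,1] be a probability distribution (Σ_{i=1}^t p(i) = 1) satisfying p(i+1) ≤ (c/i)·p(i) for each i = 1,…,t−1. Then p(1) > e^{-c}. -/
theorem prob_first_gt_exp_neg (t : ℕ) (ht : 1 ≤ t) (c : ℝ) (hc : 0 < c)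
    (p : ℕ → ℝ) (hnn : ∀ i ∈ Finset.Icc 1 t, 0 ≤ p i)
    (hsum : ∑ i ∈ Finset.Icc 1 t, p i = 1)
    (hrec : ∀ i : ℕ, 1 ≤ i → i ≤ t - 1 → p (i + 1) ≤ (c / (i : ℝ)) * p i) :
    p 1 > Real.exp (-c) := by
  -- key bound: p (j+1) ≤ c^j / j! * p 1 for j+1 ≤ t
  have key : ∀ j : ℕ, j + 1 ≤ t → p (j + 1) ≤ c ^ j / (Nat.factorial j : ℝ) * p 1 := by
    intro j
    induction j with
    | zero => intro _; simp
    | succ k ih =>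
      intro hk
      have hk' : k + 1 ≤ t := by omega
      have h1 : p (k + 1 + 1) ≤ (c / (k + 1 : ℝ)) * p (k + 1) := by
        have := hrec (k + 1) (by omega) (by omega)
        simpa using this
      have h2 : (c / (k + 1 : ℝ)) * p (k + 1) ≤ (c / (k + 1 : ℝ)) * (c ^ k / (Nat.factorial k : ℝ) * p 1) := by
        apply mul_le_mul_of_nonneg_left (ih hk')
        positivity
      calc p (k + 1 + 1) ≤ (c / (k + 1 : ℝ)) * (c ^ k / (Nat.factorial k : ℝ) * p 1) :=
            h1.trans h2
        _ = c ^ (k + 1) / (Nat.factorial (k + 1) : ℝ) * p 1 := by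
            rw [Nat.factorial_succ]
            push_cast
            field_simp
            ring
  have hp1 : 0 ≤ p 1 := hnn 1 (by simp [ht])
  -- sum bound
  have hsum2 : (1 : ℝ) ≤ (∑ j ∈ Finset.range t, c ^ j / (Nat.factorial j : ℝ)) * p 1 := by
    rw [← hsum]
    have : ∑ i ∈ Finset.Icc 1 t, p i = ∑ j ∈ Finset.range t, p (j + 1) := by
      rw [show Finset.Icc 1 t = Finset.Ico 1 (t+1) by ext x; simp,
        Finset.sum_Ico_eq_sum_range]
      simp [add_comm]
    rw [this, Finset.sum_mul]
    apply Finset.sum_le_sum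
    intro j hj
    exact key j (Finset.mem_range.mp hj)
  set S := ∑ j ∈ Finset.range t, c ^ j / (Nat.factorial j : ℝ) with hS
  have hSlt : S < Real.exp c := by
    have h1 : ∑ j ∈ Finset.range (t + 1), c ^ j / (Nat.factorial j : ℝ) ≤ Real.exp c :=
      Real.sum_le_exp_of_nonneg hc.le (t + 1)
    have h2 : S + c ^ t / (Nat.factorial t : ℝ) ≤ Real.exp c := by
      rwa [Finset.sum_range_succ] at h1
    have : 0 < c ^ t / (Nat.factorial t : ℝ) := by positivity
    linarith
  have hSpos : 0 < S := by
    have : (0:ℝ) < Real.exp c := Real.exp_pos c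
    nlinarith [hp1, hsum2]
  have hp1pos : 0 < p 1 := by
    by_contra h
    push_neg at h
    nlinarith
  have : 1 < Real.exp c * p 1 := by nlinarith
  rw [Real.exp_neg]
  rw [gt_iff_lt, inv_lt_iff_one_lt_mul₀ (Real.exp_pos c)]
  linarith [mul_comm (Real.exp c) (p 1)]
end

section
/- For every integer n ≥ 2, the number of forests on vertex set {1,…,n} satisfies |ℱₙ| > n^{n-2} · (1 + e^{-1} + e^{-2}). -/
open Function Finset SimpleGraph

set_option linter.unusedSectionVars false

variable {V : Type*} [Fintype V] [DecidableEq V]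

/-- The graph induced by a parent map. -/
def graphOf (p : V → V) : SimpleGraph V where
  Adj x y := x ≠ y ∧ (p x = y ∨ p y = x)
  symm := by constructor; intro x y h; exact ⟨h.1.symm, h.2.symm⟩
  loopless := by constructor; intro x h; exact h.1 rfl

lemma graphOf_adj {p : V → V} {x y : V} :
    (graphOf p).Adj x y ↔ x ≠ y ∧ (p x = y ∨ p y = x) := Iff.rfl

/-- A graded parent map induces an acyclic graph. -/
lemma graphOf_isAcyclic {p : V → V} (μ : V → ℕ)
    (hμ : ∀ x, p x ≠ x → μ (p x) < μ x) : (graphOf p).IsAcyclic := by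
  intro v c hc
  obtain ⟨u, hu, hmax⟩ : ∃ u ∈ c.support, ∀ y ∈ c.support, μ y ≤ μ u := by
    classical
    obtain ⟨u, hu, hmax⟩ := (c.support.toFinset).exists_max_image μ
      (by simp [List.toFinset_nonempty_iff, c.support_ne_nil])
    exact ⟨u, by simpa using hu, fun y hy => hmax y (by simpa using hy)⟩
  have hc' : (c.rotate u hu).IsCycle := hc.rotate hu
  have hsupp : ∀ y, y ∈ (c.rotate u hu).support → y ∈ c.support := by
    intro y hy
    have hrot := Walk.support_rotate c u hu
    rcases (Walk.mem_support_iff _).1 hy with rfl | hy'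
    · exact hu
    · exact List.mem_of_mem_tail ((hrot.mem_iff).1 hy')
  have hnil : ¬ (c.rotate u hu).Nil := hc'.not_nil
  obtain ⟨v₁, h, q, hce⟩ := Walk.not_nil_iff.1 hnil
  rw [hce] at hc' hsupp
  have hq : q.IsPath ∧ s(u, v₁) ∉ q.edges := (Walk.cons_isCycle_iff q h).1 hc'
  -- key step: any neighbor of u appearing in the cycle must be `p u`
  have key : ∀ z, (graphOf p).Adj u z → z ∈ c.support → z = p u := by
    intro z hadj hmem
    rcases hadj.2 with h1 | h1
    · exact h1.symm
    · exfalso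
      have hne : z ≠ u := fun hzu => hadj.1 hzu.symm
      have hlt : μ u < μ z := by
        have := hμ z (by rw [h1]; exact hne.symm)
        rwa [h1] at this
      exact absurd (hmax z hmem) (by omega)
  have hv₁ : v₁ = p u := key v₁ h (hsupp v₁ (by simp [Walk.support_cons]))
  have hqnil : ¬ q.Nil := by
    have h3 := hc'.three_le_length
    rw [Walk.length_cons] at h3
    rw [Walk.nil_iff_length_eq]
    omega
  have hrev : ¬ q.reverse.Nil := by
    rw [Walk.nil_iff_length_eq, Walk.length_reverse, ← Walk.nil_iff_length_eq]
    exact hqnil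
  obtain ⟨z, hadj, r, hqr⟩ := Walk.not_nil_iff.1 hrev
  have hzq : z ∈ q.support := by
    have : z ∈ q.reverse.support := by rw [hqr]; simp [Walk.support_cons]
    rwa [Walk.support_reverse, List.mem_reverse] at this
  have hz : z = p u :=
    key z hadj (hsupp z (by simp only [Walk.support_cons, List.mem_cons]; right; exact hzq))
  have hedge : s(u, z) ∈ q.edges := by
    have : s(u, z) ∈ q.reverse.edges := by rw [hqr]; simp
    rwa [Walk.edges_reverse, List.mem_reverse] at this
  rw [hz, ← hv₁] at hedge
  exact hq.2 hedge
/-- The descent walk from `x` to the root `a` along a parent map. -/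
noncomputable def descentW (p : V → V) (a : V) :
    ∀ (k : ℕ) (x : V), p^[k] x = a → (graphOf p).Walk x a
  | 0, x, h => (Walk.nil : (graphOf p).Walk x x).copy rfl h
  | k+1, x, h =>
    if hx : p x = x then
      (Walk.nil : (graphOf p).Walk x x).copy rfl
        (by rw [← h]; exact (Function.iterate_fixed hx (k+1)).symm)
    else
      Walk.cons (show (graphOf p).Adj x (p x) from ⟨fun he => hx he.symm, Or.inl rfl⟩)
        (descentW p a k (p x) (by rw [← Function.iterate_succ_apply]; exact h))

lemma descentW_support (p : V → V) (a : V) (k : ℕ) (x : V) (h : p^[k] x = a) :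
    ∀ y ∈ (descentW p a k x h).support, ∃ i, y = p^[i] x := by
  induction k generalizing x with
  | zero =>
    intro y hy
    subst h
    exact ⟨0, by simpa [descentW] using hy⟩
  | succ k ih =>
    intro y hy
    by_cases hx : p x = x
    · simp only [descentW, dif_pos hx, Walk.support_copy, Walk.support_nil,
        List.mem_singleton] at hy
      exact ⟨0, by simp [hy]⟩
    · simp only [descentW, dif_neg hx, Walk.support_cons, List.mem_cons] at hy
      rcases hy with rfl | hy
      · exact ⟨0, by simp⟩
      · obtain ⟨i, rfl⟩ := ih (p x) _ y hy
        exact ⟨i + 1, by rw [Function.iterate_succ_apply]⟩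

lemma mu_iterate_le {p : V → V} (μ : V → ℕ) (hμ : ∀ x, p x ≠ x → μ (p x) < μ x)
    (x : V) (i : ℕ) : μ (p^[i] x) ≤ μ x := by
  induction i with
  | zero => simp
  | succ i ih =>
    rw [Function.iterate_succ_apply']
    by_cases h : p (p^[i] x) = p^[i] x
    · rw [h]; exact ih
    · exact le_trans (le_of_lt (hμ _ h)) ih

lemma descentW_isPath {p : V → V} (μ : V → ℕ) (hμ : ∀ x, p x ≠ x → μ (p x) < μ x)
    (a : V) (k : ℕ) (x : V) (h : p^[k] x = a) : (descentW p a k x h).IsPath := by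
  induction k generalizing x with
  | zero => subst h; simp [descentW]
  | succ k ih =>
    by_cases hx : p x = x
    · simp [descentW, dif_pos hx]
    · simp only [descentW, dif_neg hx]
      rw [Walk.cons_isPath_iff]
      refine ⟨ih _ _, fun hmem => ?_⟩
      obtain ⟨i, hi⟩ := descentW_support p a k (p x) _ x hmem
      have h1 : μ (p^[i] (p x)) ≤ μ (p x) := mu_iterate_le μ hμ (p x) i
      have h2 : μ (p x) < μ x := hμ x hx
      rw [← hi] at h1
      omega

lemma descentW_getVert_one {p : V → V} (a : V) (k : ℕ) (x : V) (h : p^[k] x = a)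
    (hxa : x ≠ a) : (descentW p a k x h).getVert 1 = p x := by
  induction k generalizing x with
  | zero => exact absurd h hxa
  | succ k ih =>
    by_cases hx : p x = x
    · exact absurd (by rw [← h]; exact (Function.iterate_fixed hx (k+1)).symm) hxa
    · simp only [descentW, dif_neg hx]
      rw [Walk.getVert_cons _ _ (by norm_num), Walk.getVert_zero]

lemma transport_isPath {G H : SimpleGraph V} (hGH : G = H) {x y : V} (w : G.Walk x y) :
    (hGH ▸ w : H.Walk x y).IsPath ↔ w.IsPath := by subst hGH; rfl

lemma transport_getVert {G H : SimpleGraph V} (hGH : G = H) {x y : V} (w : G.Walk x y) (i : ℕ) :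
    (hGH ▸ w : H.Walk x y).getVert i = w.getVert i := by subst hGH; rfl

/-- Recovery of parent values from the graph. -/
lemma parent_eq_of_graphOf_eq {p q : V → V} (μp μq : V → ℕ)
    (hμp : ∀ x, p x ≠ x → μp (p x) < μp x) (hμq : ∀ x, q x ≠ x → μq (q x) < μq x)
    (a : V) (hpa : p a = a) (hqa : q a = a)
    (hG : graphOf p = graphOf q) (x : V)
    (hkp : ∃ k, p^[k] x = a) (hkq : ∃ k, q^[k] x = a) : p x = q x := by
  by_cases hxa : x = a
  · rw [hxa, hpa, hqa]
  · obtain ⟨kp, hp⟩ := hkp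
    obtain ⟨kq, hq⟩ := hkq
    have hac : (graphOf p).IsAcyclic := by
      intro v c hc
      exact graphOf_isAcyclic μp hμp c hc
    set wp := descentW p a kp x hp with hwp
    set wq : (graphOf p).Walk x a := hG.symm ▸ descentW q a kq x hq with hwq
    have h1 : wp.IsPath := descentW_isPath μp hμp a kp x hp
    have h2 : wq.IsPath := by
      rw [hwq, transport_isPath hG.symm]
      exact descentW_isPath μq hμq a kq x hq
    have : (⟨wp, h1⟩ : (graphOf p).Path x a) = ⟨wq, h2⟩ := hac.path_unique _ _
    have hww : wp = wq := congrArg Subtype.val this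
    have e1 : wp.getVert 1 = p x := descentW_getVert_one a kp x hp hxa
    have e2 : wq.getVert 1 = q x := by
      rw [hwq, transport_getVert hG.symm]
      exact descentW_getVert_one a kq x hq hxa
    rw [← e1, hww, e2]
section Joyal
open Function Finset

variable {V : Type*} [Fintype V] [LinearOrder V]

open scoped Classical in
/-- The periodic points of `f` inside `A`. -/
noncomputable def Zset (A : Finset V) (f : V → V) : Finset V :=
  A.filter (· ∈ periodicPts f)

lemma mem_Zset {A : Finset V} {f : V → V} {x : V} :
    x ∈ Zset A f ↔ x ∈ A ∧ x ∈ periodicPts f := by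
  simp [Zset]

noncomputable def zlist (A : Finset V) (f : V → V) : List V := (Zset A f).sort (· ≤ ·)

noncomputable def wlist (A : Finset V) (f : V → V) : List V := (zlist A f).map f

variable {A : Finset V} {f : V → V}

lemma zlist_nodup : (zlist A f).Nodup := Finset.sort_nodup _ _

lemma mem_zlist {x : V} : x ∈ zlist A f ↔ x ∈ Zset A f := Finset.mem_sort _

lemma zlist_length : (zlist A f).length = (Zset A f).card := Finset.length_sort _

lemma Zset_subset : Zset A f ⊆ A := fun x hx => (mem_Zset.1 hx).1

lemma f_mem_Zset (hfA : ∀ x ∈ A, f x ∈ A) {x : V} (hx : x ∈ Zset A f) : f x ∈ Zset A f := by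
  rw [mem_Zset] at hx ⊢
  obtain ⟨n, hn, hper⟩ := Function.mem_periodicPts.1 hx.2
  exact ⟨hfA x hx.1, Function.mem_periodicPts.2 ⟨n, hn, hper.apply⟩⟩

lemma f_injOn_Zset {x y : V} (hx : x ∈ Zset A f) (hy : y ∈ Zset A f)
    (hxy : f x = f y) : x = y := by
  obtain ⟨n, hn, hpern⟩ := Function.mem_periodicPts.1 (mem_Zset.1 hx).2
  obtain ⟨k, hk, hperk⟩ := Function.mem_periodicPts.1 (mem_Zset.1 hy).2
  have hx' : f^[n * k] x = x := hpern.mul_const k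
  have hy' : f^[n * k] y = y := hperk.const_mul n
  have hnk : n * k = (n * k - 1) + 1 := by
    have : 1 ≤ n * k := Nat.one_le_iff_ne_zero.2 (Nat.mul_ne_zero hn.ne' hk.ne')
    omega
  rw [hnk, Function.iterate_succ_apply] at hx' hy'
  rw [← hx', ← hy', hxy]

lemma wlist_nodup : (wlist A f).Nodup := by
  refine List.Nodup.map_on ?_ zlist_nodup
  intro x hx y hy hxy
  exact f_injOn_Zset (mem_zlist.1 hx) (mem_zlist.1 hy) hxy

lemma wlist_length : (wlist A f).length = (Zset A f).card := by
  rw [wlist, List.length_map, zlist_length]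

lemma mem_wlist (hfA : ∀ x ∈ A, f x ∈ A) {y : V} : y ∈ wlist A f ↔ y ∈ Zset A f := by
  constructor
  · intro hy
    obtain ⟨z, hz, rfl⟩ := List.mem_map.1 hy
    exact f_mem_Zset hfA (mem_zlist.1 hz)
  · intro hy
    have hsub : (wlist A f).toFinset ⊆ Zset A f := by
      intro w hw
      rw [List.mem_toFinset] at hw
      obtain ⟨z, hz, rfl⟩ := List.mem_map.1 hw
      exact f_mem_Zset hfA (mem_zlist.1 hz)
    have hcard : (Zset A f).card ≤ (wlist A f).toFinset.card := by
      rw [List.toFinset_card_of_nodup wlist_nodup, wlist_length]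
    have := Finset.eq_of_subset_of_card_le hsub hcard
    rw [← this, List.mem_toFinset] at hy
    exact hy

/-- The Joyal parent map. -/
noncomputable def joyalP (A : Finset V) (f : V → V) : V → V := fun x =>
  if x ∈ Zset A f then (wlist A f).getD ((wlist A f).idxOf x - 1) x else f x

/-- The root. -/
noncomputable def rootA (A : Finset V) (f : V → V) (hZ : (Zset A f).Nonempty) : V :=
  f ((Zset A f).min' hZ)

/-- The second mark. -/
noncomputable def markB (A : Finset V) (f : V → V) (hZ : (Zset A f).Nonempty) : V :=
  f ((Zset A f).max' hZ)

lemma Zset_nonempty (hfA : ∀ x ∈ A, f x ∈ A) (hA : A.Nonempty) : (Zset A f).Nonempty := by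
  obtain ⟨x₀, hx₀⟩ := hA
  have hiter : ∀ k, f^[k] x₀ ∈ A := by
    intro k
    induction k with
    | zero => simpa using hx₀
    | succ k ih => rw [Function.iterate_succ_apply']; exact hfA _ ih
  obtain ⟨i, j, hij, he⟩ := Fintype.exists_ne_map_eq_of_card_lt
    (fun i : Fin (Fintype.card V + 1) => f^[(i : ℕ)] x₀) (by simp)
  rcases lt_or_gt_of_ne (fun h : (i:ℕ) = (j:ℕ) => hij (Fin.ext h)) with hlt | hlt
  · refine ⟨f^[(i:ℕ)] x₀, mem_Zset.2 ⟨hiter _, Function.mem_periodicPts.2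
      ⟨(j:ℕ) - (i:ℕ), by omega, ?_⟩⟩⟩
    show f^[(j:ℕ)-(i:ℕ)] (f^[(i:ℕ)] x₀) = f^[(i:ℕ)] x₀
    rw [← Function.iterate_add_apply]
    rw [show (j:ℕ) - (i:ℕ) + (i:ℕ) = (j:ℕ) by omega]
    exact he.symm
  · refine ⟨f^[(j:ℕ)] x₀, mem_Zset.2 ⟨hiter _, Function.mem_periodicPts.2
      ⟨(i:ℕ) - (j:ℕ), by omega, ?_⟩⟩⟩
    show f^[(i:ℕ)-(j:ℕ)] (f^[(j:ℕ)] x₀) = f^[(j:ℕ)] x₀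
    rw [← Function.iterate_add_apply]
    rw [show (i:ℕ) - (j:ℕ) + (j:ℕ) = (i:ℕ) by omega]
    exact he

lemma wlist_getElem (i : ℕ) (hi : i < (wlist A f).length) :
    (wlist A f)[i] = f ((zlist A f)[i]'(by rw [wlist, List.length_map] at hi; exact hi)) := by
  simp [wlist]

lemma getElem_idx_congr {α : Type*} (l : List α) {i j : ℕ} (h : i = j) (hi : i < l.length) :
    l[i]'hi = l[j]'(h ▸ hi) := by subst h; rfl

lemma zlist_getElem_zero (hZ : (Zset A f).Nonempty) (h0 : 0 < (zlist A f).length) :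
    (zlist A f)[0] = (Zset A f).min' hZ := by
  have := Finset.min'_eq_sorted_zero (s := Zset A f) (h := hZ)
  rw [this]
  rfl

lemma zlist_getElem_last (hZ : (Zset A f).Nonempty) (h0 : 0 < (zlist A f).length) :
    (zlist A f)[(zlist A f).length - 1]'(by omega) = (Zset A f).max' hZ := by
  have := Finset.max'_eq_sorted_last (s := Zset A f) (h := hZ)
  rw [this]
  rfl

lemma rootA_eq_wlist_zero (hZ : (Zset A f).Nonempty) (h0 : 0 < (wlist A f).length) :
    rootA A f hZ = (wlist A f)[0] := by
  have h0' : 0 < (zlist A f).length := by rwa [wlist, List.length_map] at h0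
  rw [wlist_getElem, zlist_getElem_zero hZ h0', rootA]

lemma markB_eq_wlist_last (hZ : (Zset A f).Nonempty) (h0 : 0 < (wlist A f).length) :
    markB A f hZ = (wlist A f)[(wlist A f).length - 1]'(by omega) := by
  have h0' : 0 < (zlist A f).length := by rwa [wlist, List.length_map] at h0
  have hlen : (wlist A f).length = (zlist A f).length := by rw [wlist, List.length_map]
  rw [wlist_getElem]
  rw [getElem_idx_congr _ (show (wlist A f).length - 1 = (zlist A f).length - 1 by omega)]
  rw [zlist_getElem_last hZ h0', markB]

end Joyal
section Joyal2
open Function Finset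

variable {V : Type*} [Fintype V] [LinearOrder V]
variable {A : Finset V} {f : V → V}

lemma joyalP_mem_Zset {x : V} (hfA : ∀ y ∈ A, f y ∈ A) (hx : x ∈ Zset A f) :
    joyalP A f x ∈ Zset A f := by
  rw [joyalP, if_pos hx]
  have hxw : x ∈ wlist A f := (mem_wlist hfA).2 hx
  have hidx : (wlist A f).idxOf x < (wlist A f).length := List.idxOf_lt_length_iff.2 hxw
  rw [List.getD_eq_getElem _ _ (by omega)]
  exact (mem_wlist hfA).1 (List.getElem_mem _)

lemma joyalP_mem (hfA : ∀ y ∈ A, f y ∈ A) {x : V} (hx : x ∈ A) : joyalP A f x ∈ A := by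
  by_cases hxZ : x ∈ Zset A f
  · exact Zset_subset (joyalP_mem_Zset hfA hxZ)
  · rw [joyalP, if_neg hxZ]; exact hfA x hx

lemma joyalP_not_mem {x : V} (hx : x ∉ Zset A f) : joyalP A f x = f x := by
  rw [joyalP, if_neg hx]

lemma joyalP_wlist (hfA : ∀ y ∈ A, f y ∈ A) (i : ℕ) (hi : i < (wlist A f).length) :
    joyalP A f ((wlist A f)[i]) = (wlist A f)[i - 1]'(by omega) := by
  have hmem : (wlist A f)[i] ∈ Zset A f := (mem_wlist hfA).1 (List.getElem_mem _)
  rw [joyalP, if_pos hmem, List.Nodup.idxOf_getElem wlist_nodup i hi,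
    List.getD_eq_getElem _ _ (by omega)]

lemma joyalP_rootA (hfA : ∀ y ∈ A, f y ∈ A) (hZ : (Zset A f).Nonempty) :
    joyalP A f (rootA A f hZ) = rootA A f hZ := by
  have h0 : 0 < (wlist A f).length := by
    rw [wlist_length]; exact Finset.card_pos.2 hZ
  rw [rootA_eq_wlist_zero hZ h0, joyalP_wlist hfA 0 h0]

lemma rootA_mem_Zset (hfA : ∀ y ∈ A, f y ∈ A) (hZ : (Zset A f).Nonempty) :
    rootA A f hZ ∈ Zset A f := by
  have h0 : 0 < (wlist A f).length := by rw [wlist_length]; exact Finset.card_pos.2 hZ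
  rw [rootA_eq_wlist_zero hZ h0]
  exact (mem_wlist hfA).1 (List.getElem_mem _)

/-- The only fixed point of the Joyal parent map inside `A` is the root. -/
lemma joyalP_fixed_iff (hfA : ∀ y ∈ A, f y ∈ A) (hZ : (Zset A f).Nonempty) {x : V}
    (hx : x ∈ A) : joyalP A f x = x ↔ x = rootA A f hZ := by
  have h0 : 0 < (wlist A f).length := by rw [wlist_length]; exact Finset.card_pos.2 hZ
  constructor
  · intro hfix
    by_cases hxZ : x ∈ Zset A f
    · have hxw : x ∈ wlist A f := (mem_wlist hfA).2 hxZ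
      obtain ⟨i, hi, rfl⟩ := List.getElem_of_mem hxw
      rw [joyalP_wlist hfA i hi] at hfix
      have : i - 1 = i := wlist_nodup.getElem_inj_iff.1 hfix
      have hi0 : i = 0 := by omega
      subst hi0
      rw [rootA_eq_wlist_zero hZ h0]
    · rw [joyalP_not_mem hxZ] at hfix
      exact absurd (mem_Zset.2 ⟨hx, Function.mem_periodicPts.2
        ⟨1, one_pos, by simpa [Function.IsPeriodicPt, Function.IsFixedPt] using hfix⟩⟩) hxZ
  · rintro rfl
    exact joyalP_rootA hfA hZ

lemma exists_iterate_mem_Zset (hfA : ∀ y ∈ A, f y ∈ A) {x : V} (hx : x ∈ A) :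
    ∃ k, f^[k] x ∈ Zset A f := by
  have hiter : ∀ k, f^[k] x ∈ A := by
    intro k
    induction k with
    | zero => simpa using hx
    | succ k ih => rw [Function.iterate_succ_apply']; exact hfA _ ih
  obtain ⟨i, j, hij, he⟩ := Fintype.exists_ne_map_eq_of_card_lt
    (fun i : Fin (Fintype.card V + 1) => f^[(i : ℕ)] x) (by simp)
  rcases lt_or_gt_of_ne (fun h : (i:ℕ) = (j:ℕ) => hij (Fin.ext h)) with hlt | hlt
  · refine ⟨(i:ℕ), mem_Zset.2 ⟨hiter _, Function.mem_periodicPts.2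
      ⟨(j:ℕ) - (i:ℕ), by omega, ?_⟩⟩⟩
    show f^[(j:ℕ)-(i:ℕ)] (f^[(i:ℕ)] x) = f^[(i:ℕ)] x
    rw [← Function.iterate_add_apply, show (j:ℕ) - (i:ℕ) + (i:ℕ) = (j:ℕ) by omega]
    exact he.symm
  · refine ⟨(j:ℕ), mem_Zset.2 ⟨hiter _, Function.mem_periodicPts.2
      ⟨(i:ℕ) - (j:ℕ), by omega, ?_⟩⟩⟩
    show f^[(i:ℕ)-(j:ℕ)] (f^[(j:ℕ)] x) = f^[(j:ℕ)] x
    rw [← Function.iterate_add_apply, show (i:ℕ) - (j:ℕ) + (j:ℕ) = (i:ℕ) by omega]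
    exact he

open scoped Classical in
/-- Grading for the Joyal parent map. -/
noncomputable def muJ (A : Finset V) (f : V → V) (hfA : ∀ y ∈ A, f y ∈ A) : V → ℕ := fun x =>
  if x ∈ Zset A f then (wlist A f).idxOf x
  else if hx : x ∈ A then (Zset A f).card + Nat.find (exists_iterate_mem_Zset hfA hx) else 0

lemma muJ_grade (hfA : ∀ y ∈ A, f y ∈ A) :
    ∀ x ∈ A, joyalP A f x ≠ x → muJ A f hfA (joyalP A f x) < muJ A f hfA x := by
  intro x hx hne
  by_cases hxZ : x ∈ Zset A f
  · have hxw : x ∈ wlist A f := (mem_wlist hfA).2 hxZ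
    obtain ⟨i, hi, rfl⟩ := List.getElem_of_mem hxw
    rw [joyalP_wlist hfA i hi] at hne ⊢
    have hi0 : i ≠ 0 := by
      intro h; subst h; exact hne rfl
    have hm1 : (wlist A f)[i-1]'(by omega) ∈ Zset A f := (mem_wlist hfA).1 (List.getElem_mem _)
    rw [muJ, if_pos hm1, muJ, if_pos hxZ,
      List.Nodup.idxOf_getElem wlist_nodup, List.Nodup.idxOf_getElem wlist_nodup]
    omega
  · rw [joyalP_not_mem hxZ] at hne ⊢
    have hk := Nat.find_spec (exists_iterate_mem_Zset hfA hx)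
    set k₀ := Nat.find (exists_iterate_mem_Zset hfA hx) with hk₀
    have hk0ne : k₀ ≠ 0 := by
      intro h
      rw [h] at hk
      simp only [Function.iterate_zero_apply] at hk
      exact hxZ hk
    have hmx : muJ A f hfA x = (Zset A f).card + k₀ := by
      rw [muJ, if_neg hxZ, dif_pos hx]
    by_cases hfxZ : f x ∈ Zset A f
    · have : muJ A f hfA (f x) = (wlist A f).idxOf (f x) := by rw [muJ, if_pos hfxZ]
      have hlt : (wlist A f).idxOf (f x) < (wlist A f).length :=
        List.idxOf_lt_length_iff.2 ((mem_wlist hfA).2 hfxZ)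
      rw [this, hmx]
      rw [wlist_length] at hlt
      omega
    · have hfx : f x ∈ A := hfA x hx
      have hspec : f^[k₀ - 1] (f x) ∈ Zset A f := by
        rw [← Function.iterate_succ_apply, show (k₀ - 1).succ = k₀ by omega]
        exact hk
      have hle : Nat.find (exists_iterate_mem_Zset hfA hfx) ≤ k₀ - 1 :=
        Nat.find_le hspec
      have : muJ A f hfA (f x) = (Zset A f).card + Nat.find (exists_iterate_mem_Zset hfA hfx) := by
        rw [muJ, if_neg hfxZ, dif_pos hfx]
      rw [this, hmx]
      omega

lemma joyalP_reach (hfA : ∀ y ∈ A, f y ∈ A) (hZ : (Zset A f).Nonempty) :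
    ∀ x ∈ A, ∃ k, (joyalP A f)^[k] x = rootA A f hZ := by
  have main : ∀ n, ∀ x ∈ A, muJ A f hfA x ≤ n → ∃ k, (joyalP A f)^[k] x = rootA A f hZ := by
    intro n
    induction n with
    | zero =>
      intro x hx h0
      by_cases hfix : joyalP A f x = x
      · exact ⟨0, by simpa using (joyalP_fixed_iff hfA hZ hx).1 hfix⟩
      · exact absurd (muJ_grade hfA x hx hfix) (by omega)
    | succ n ih =>
      intro x hx hle
      by_cases hfix : joyalP A f x = x
      · exact ⟨0, by simpa using (joyalP_fixed_iff hfA hZ hx).1 hfix⟩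
      · have hlt := muJ_grade hfA x hx hfix
        obtain ⟨k, hk⟩ := ih (joyalP A f x) (joyalP_mem hfA hx) (by omega)
        exact ⟨k + 1, by rw [Function.iterate_succ_apply]; exact hk⟩
  intro x hx
  exact main (muJ A f hfA x) x hx le_rfl

end Joyal2
section Joyal3
open Function Finset

variable {V : Type*} [Fintype V] [LinearOrder V]
variable {A : Finset V} {f : V → V}

lemma getElem_list_congr {α : Type*} {l l' : List α} (h : l = l') (i : ℕ) (hi : i < l.length) :
    l[i]'hi = l'[i]'(h ▸ hi) := by subst h; rfl

lemma joyalP_iterate_markB (hfA : ∀ y ∈ A, f y ∈ A) (hZ : (Zset A f).Nonempty) (i : ℕ)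
    (hi : i < (wlist A f).length) :
    (joyalP A f)^[i] (markB A f hZ) =
      (wlist A f)[(wlist A f).length - 1 - i]'(by omega) := by
  induction i with
  | zero =>
    simpa using markB_eq_wlist_last hZ (by omega)
  | succ i ih =>
    rw [Function.iterate_succ_apply', ih (by omega),
      joyalP_wlist hfA _ (by omega)]
    first
    | rfl
    | (congr 1; omega)

lemma markB_mem_Zset (hfA : ∀ y ∈ A, f y ∈ A) (hZ : (Zset A f).Nonempty) :
    markB A f hZ ∈ Zset A f := by
  have h0 : 0 < (wlist A f).length := by rw [wlist_length]; exact Finset.card_pos.2 hZ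
  rw [markB_eq_wlist_last hZ h0]
  exact (mem_wlist hfA).1 (List.getElem_mem _)

lemma mem_Zset_iff_orbit (hfA : ∀ y ∈ A, f y ∈ A) (hZ : (Zset A f).Nonempty) {z : V} :
    z ∈ Zset A f ↔ ∃ i, (joyalP A f)^[i] (markB A f hZ) = z := by
  constructor
  · intro hz
    obtain ⟨j, hj, rfl⟩ := List.getElem_of_mem ((mem_wlist hfA).2 hz)
    refine ⟨(wlist A f).length - 1 - j, ?_⟩
    rw [joyalP_iterate_markB hfA hZ _ (by omega)]
    first
    | rfl
    | (congr 1; omega)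
  · rintro ⟨i, rfl⟩
    induction i with
    | zero => simpa using markB_mem_Zset hfA hZ
    | succ i ih =>
      rw [Function.iterate_succ_apply']
      exact joyalP_mem_Zset hfA ih

/-- Recovery: `f` on `A` is determined by the Joyal parent map and the mark `b`. -/
lemma joyal_recover {g : V → V} (hfA : ∀ y ∈ A, f y ∈ A) (hgA : ∀ y ∈ A, g y ∈ A)
    (hZf : (Zset A f).Nonempty) (hZg : (Zset A g).Nonempty)
    (hpq : ∀ x ∈ A, joyalP A f x = joyalP A g x)
    (hb : markB A f hZf = markB A g hZg) :
    ∀ x ∈ A, f x = g x := by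
  have hit : ∀ i, ∀ x ∈ A, (joyalP A f)^[i] x = (joyalP A g)^[i] x ∧ (joyalP A f)^[i] x ∈ A := by
    intro i
    induction i with
    | zero => intro x hx; simpa using hx
    | succ i ih =>
      intro x hx
      obtain ⟨he, hm⟩ := ih x hx
      rw [Function.iterate_succ_apply', Function.iterate_succ_apply', ← he]
      exact ⟨hpq _ hm, joyalP_mem hfA hm⟩
  have hbA : markB A f hZf ∈ A := Zset_subset (markB_mem_Zset hfA hZf)
  have hZeq : Zset A f = Zset A g := by
    apply Finset.ext
    intro z
    rw [mem_Zset_iff_orbit hfA hZf, mem_Zset_iff_orbit hgA hZg]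
    constructor
    · rintro ⟨i, rfl⟩
      exact ⟨i, by rw [← hb, (hit i _ hbA).1]⟩
    · rintro ⟨i, rfl⟩
      exact ⟨i, by rw [← hb, (hit i _ hbA).1]⟩
  have hzl : zlist A f = zlist A g := by rw [zlist, zlist, hZeq]
  have hwlen : (wlist A f).length = (wlist A g).length := by
    rw [wlist_length, wlist_length, hZeq]
  have hwl : wlist A f = wlist A g := by
    apply List.ext_getElem hwlen
    intro j hjf hjg
    have hjl : j < (wlist A f).length := hjf
    have h1 : (wlist A f)[j] = (joyalP A f)^[(wlist A f).length - 1 - j] (markB A f hZf) := by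
      rw [joyalP_iterate_markB hfA hZf _ (by omega)]
      exact (getElem_idx_congr _ (by omega) _).symm
    have h2 : (wlist A g)[j] = (joyalP A g)^[(wlist A g).length - 1 - j] (markB A g hZg) := by
      rw [joyalP_iterate_markB hgA hZg _ (by omega)]
      exact (getElem_idx_congr _ (by omega) _).symm
    rw [h1, h2, ← hb, (hit _ _ hbA).1, hwlen]
  intro x hx
  by_cases hxZ : x ∈ Zset A f
  · obtain ⟨i, hi, rfl⟩ := List.getElem_of_mem (mem_zlist.2 hxZ)
    have hiz : i < (zlist A g).length := by rw [← hzl]; omega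
    have hiwf : i < (wlist A f).length := by rw [wlist_length, ← zlist_length]; omega
    have hiwg : i < (wlist A g).length := by rw [← hwlen]; exact hiwf
    have e1 : f ((zlist A f)[i]) = (wlist A f)[i]'hiwf := (wlist_getElem i hiwf).symm
    have e2 : g ((zlist A g)[i]'hiz) = (wlist A g)[i]'hiwg := (wlist_getElem i hiwg).symm
    have e3 : (zlist A f)[i] = (zlist A g)[i]'hiz := getElem_list_congr hzl i hi
    rw [e1, e3, e2]
    exact getElem_list_congr hwl i hiwf
  · have hxZg : x ∉ Zset A g := by rwa [hZeq] at hxZ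
    rw [← joyalP_not_mem hxZ, ← joyalP_not_mem hxZg]
    exact hpq x hx

end Joyal3
section Merged
open Function Finset SimpleGraph

variable {V : Type*} [Fintype V] [LinearOrder V]
variable {S : Finset V} {f : V → V}

/-- Walks stay in adjacency-closed sets. -/
lemma walk_mem_closed {G : SimpleGraph V} {T : Set V}
    (hT : ∀ x ∈ T, ∀ y, G.Adj x y → y ∈ T) {x y : V} (w : G.Walk x y) (hx : x ∈ T) :
    y ∈ T := by
  induction w with
  | nil => exact hx
  | cons h w ih => exact ih (hT _ hx _ h)

lemma reachable_root_of_iter {p : V → V} {r : V} :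
    ∀ (k : ℕ) (x : V), p^[k] x = r → (graphOf p).Reachable x r := by
  intro k
  induction k with
  | zero => intro x h; rw [show x = r from h]
  | succ k ih =>
    intro x h
    by_cases hx : p x = x
    · rw [show x = r from by rw [← h, Function.iterate_fixed hx]]
    · have hadj : (graphOf p).Adj x (p x) := ⟨fun he => hx he.symm, Or.inl rfl⟩
      exact hadj.reachable.trans (ih (p x) (by rwa [← Function.iterate_succ_apply]))

section WithHyp
variable (hS : ∀ x ∈ S, f x ∈ S ∧ f x ≤ x) (hA : ∀ x ∉ S, f x ∉ S)
  (hcard : S.card ≤ 2)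

lemma hfA' (hA : ∀ x ∉ S, f x ∉ S) : ∀ x ∈ Sᶜ, f x ∈ (Sᶜ : Finset V) := by
  intro x hx
  rw [Finset.mem_compl] at hx ⊢
  exact hA x hx

include hS hcard in
lemma f_idem_S : ∀ x ∈ S, f (f x) = f x := by
  intro x hx
  by_cases hfx : f x = x
  · rw [hfx, hfx]
  · by_contra hne
    have h1 := hS x hx
    have h2 := hS _ h1.1
    have hlt1 : f x < x := lt_of_le_of_ne h1.2 hfx
    have hlt2 : f (f x) < f x := lt_of_le_of_ne h2.2 hne
    have hsub : ({x, f x, f (f x)} : Finset V) ⊆ S := by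
      intro y hy
      simp only [Finset.mem_insert, Finset.mem_singleton] at hy
      rcases hy with rfl | rfl | rfl
      · exact hx
      · exact h1.1
      · exact h2.1
    have hc3 : ({x, f x, f (f x)} : Finset V).card = 3 := by
      rw [Finset.card_insert_of_notMem (by
        simp only [Finset.mem_insert, Finset.mem_singleton]
        push_neg
        exact ⟨ne_of_gt hlt1, ne_of_gt (lt_trans hlt2 hlt1)⟩),
        Finset.card_insert_of_notMem (by
          simp only [Finset.mem_singleton]
          exact ne_of_gt hlt2), Finset.card_singleton]
    have := Finset.card_le_card hsub
    omega

/-- Global grading for the merged parent map. -/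
noncomputable def muG (S : Finset V) (f : V → V) (hA : ∀ x ∉ S, f x ∉ S) : V → ℕ := fun x =>
  if x ∈ (Sᶜ : Finset V) then 2 + muJ Sᶜ f (hfA' hA) x else if f x = x then 0 else 1

lemma merged_grade (hS : ∀ x ∈ S, f x ∈ S ∧ f x ≤ x) (hA : ∀ x ∉ S, f x ∉ S)
    (hcard : S.card ≤ 2) :
    ∀ x, joyalP Sᶜ f x ≠ x → muG S f hA (joyalP Sᶜ f x) < muG S f hA x := by
  intro x hne
  simp only [muG]
  by_cases hx : x ∈ (Sᶜ : Finset V)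
  · have hpx : joyalP Sᶜ f x ∈ (Sᶜ : Finset V) := joyalP_mem (hfA' hA) hx
    simp only [if_pos hx, if_pos hpx]
    have := muJ_grade (hfA' hA) x hx hne
    omega
  · have hxS : x ∈ S := by rwa [Finset.mem_compl, not_not] at hx
    have hpxf : joyalP Sᶜ f x = f x :=
      joyalP_not_mem (fun hmem => (Finset.mem_compl.1 (Zset_subset hmem)) hxS)
    rw [hpxf] at hne ⊢
    have hfxS : f x ∈ S := (hS x hxS).1
    have hfxc : f x ∉ (Sᶜ : Finset V) := by rwa [Finset.mem_compl, not_not]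
    simp only [if_neg hx, if_neg hfxc, if_neg hne, f_idem_S hS hcard x hxS, if_pos]
    omega

include hS hA hcard in
lemma merged_acyclic : (graphOf (joyalP Sᶜ f)).IsAcyclic :=
  graphOf_isAcyclic (muG S f hA) (merged_grade hS hA hcard)

include hS hA in
lemma merged_closed :
    ∀ x ∈ (↑(Sᶜ : Finset V) : Set V), ∀ y, (graphOf (joyalP Sᶜ f)).Adj x y →
      y ∈ (↑(Sᶜ : Finset V) : Set V) := by
  intro x hx y hadj
  simp only [Finset.coe_compl, Set.mem_compl_iff, Finset.mem_coe] at hx ⊢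
  rcases hadj.2 with h1 | h1
  · intro hyS
    have : joyalP Sᶜ f x ∈ (Sᶜ : Finset V) := joyalP_mem (hfA' hA) (Finset.mem_compl.2 hx)
    rw [h1] at this
    exact Finset.mem_compl.1 this hyS
  · intro hyS
    have hpy : joyalP Sᶜ f y = f y :=
      joyalP_not_mem (fun hmem => (Finset.mem_compl.1 (Zset_subset hmem)) hyS)
    rw [hpy] at h1
    have : f y ∈ S := (hS y hyS).1
    rw [h1] at this
    exact hx this

include hS hA in
lemma merged_supp (hAne : (Sᶜ : Finset V).Nonempty) :
    ((graphOf (joyalP Sᶜ f)).connectedComponentMk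
      (rootA Sᶜ f (Zset_nonempty (hfA' hA) hAne))).supp = ↑(Sᶜ : Finset V) := by
  set hZ := Zset_nonempty (hfA' hA) hAne
  have hroot : rootA Sᶜ f hZ ∈ (Sᶜ : Finset V) := Zset_subset (rootA_mem_Zset (hfA' hA) hZ)
  apply Set.eq_of_subset_of_subset
  · intro y hy
    rw [SimpleGraph.ConnectedComponent.mem_supp_iff] at hy
    have hreach : (graphOf (joyalP Sᶜ f)).Reachable (rootA Sᶜ f hZ) y :=
      (SimpleGraph.ConnectedComponent.eq.1 hy).symm
    obtain ⟨w⟩ := hreach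
    exact walk_mem_closed (merged_closed hS hA) w hroot
  · intro y hy
    rw [Finset.mem_coe, Finset.mem_compl] at hy
    rw [SimpleGraph.ConnectedComponent.mem_supp_iff, SimpleGraph.ConnectedComponent.eq]
    obtain ⟨k, hk⟩ := joyalP_reach (hfA' hA) hZ y (Finset.mem_compl.2 hy)
    exact reachable_root_of_iter k y hk

end WithHyp

/-- Full injectivity at the merged level, given agreement on `S`. -/
lemma merged_inj {g : V → V}
    (hfS : ∀ x ∈ S, f x ∈ S ∧ f x ≤ x) (hfA : ∀ x ∉ S, f x ∉ S)
    (hgS : ∀ x ∈ S, g x ∈ S ∧ g x ≤ x) (hgA : ∀ x ∉ S, g x ∉ S)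
    (hcard : S.card ≤ 2) (hAne : (Sᶜ : Finset V).Nonempty)
    (hG : graphOf (joyalP Sᶜ f) = graphOf (joyalP Sᶜ g))
    (hroot : rootA Sᶜ f (Zset_nonempty (hfA' hfA) hAne)
           = rootA Sᶜ g (Zset_nonempty (hfA' hgA) hAne))
    (hmark : markB Sᶜ f (Zset_nonempty (hfA' hfA) hAne)
           = markB Sᶜ g (Zset_nonempty (hfA' hgA) hAne))
    (hSagree : ∀ x ∈ S, f x = g x) : f = g := by
  set hZf := Zset_nonempty (hfA' hfA) hAne
  set hZg := Zset_nonempty (hfA' hgA) hAne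
  have hpq : ∀ x ∈ (Sᶜ : Finset V), joyalP Sᶜ f x = joyalP Sᶜ g x := by
    intro x hx
    refine parent_eq_of_graphOf_eq _ _ (merged_grade hfS hfA hcard) (merged_grade hgS hgA hcard)
      (rootA Sᶜ f hZf) (joyalP_rootA (hfA' hfA) hZf) ?_ hG x ?_ ?_
    · rw [hroot]; exact joyalP_rootA (hfA' hgA) hZg
    · exact joyalP_reach (hfA' hfA) hZf x hx
    · rw [hroot]; exact joyalP_reach (hfA' hgA) hZg x hx
  have hfg : ∀ x ∈ (Sᶜ : Finset V), f x = g x :=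
    joyal_recover (hfA' hfA) (hfA' hgA) hZf hZg hpq hmark
  funext x
  by_cases hx : x ∈ S
  · exact hSagree x hx
  · exact hfg x (Finset.mem_compl.2 hx)

end Merged
section TopLevel
open Function Finset SimpleGraph

variable {V : Type*} [Fintype V] [LinearOrder V]

/-- The encoding of a configuration as a forest with two marks. -/
noncomputable def encode (S : Finset V) (f : V → V)
    (hS : ∀ x ∈ S, f x ∈ S ∧ f x ≤ x) (hA : ∀ x ∉ S, f x ∉ S)
    (hcard : S.card ≤ 2) (hAne : (Sᶜ : Finset V).Nonempty) :
    {G : SimpleGraph V // G.IsAcyclic} × V × V :=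
  (⟨graphOf (joyalP Sᶜ f), merged_acyclic hS hA hcard⟩,
    rootA Sᶜ f (Zset_nonempty (hfA' hA) hAne),
    markB Sᶜ f (Zset_nonempty (hfA' hA) hAne))

lemma encode_S_eq {S S' : Finset V} {f f' : V → V}
    {hS hA hcard hAne} {hS' hA' hcard' hAne'}
    (h : encode S f hS hA hcard hAne = encode S' f' hS' hA' hcard' hAne') : S = S' := by
  have hG : graphOf (joyalP Sᶜ f) = graphOf (joyalP S'ᶜ f') :=
    congrArg Subtype.val (congrArg Prod.fst h)
  have hr : rootA Sᶜ f (Zset_nonempty (hfA' hA) hAne)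
      = rootA S'ᶜ f' (Zset_nonempty (hfA' hA') hAne') :=
    congrArg (Prod.fst ∘ Prod.snd) h
  have h1 := merged_supp hS hA hAne
  have h2 := merged_supp hS' hA' hAne'
  rw [← hG, ← hr] at h2
  have : (↑(Sᶜ : Finset V) : Set V) = ↑(S'ᶜ : Finset V) := h1.symm.trans h2
  have := Finset.coe_injective this
  exact compl_injective this

lemma encode_f_eq {S : Finset V} {f f' : V → V}
    {hS hA hcard hAne} {hS' hA' hcard' hAne'}
    (h : encode S f hS hA hcard hAne = encode S f' hS' hA' hcard' hAne')
    (hSagree : ∀ x ∈ S, f x = f' x) : f = f' := by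
  have hG : graphOf (joyalP Sᶜ f) = graphOf (joyalP Sᶜ f') :=
    congrArg Subtype.val (congrArg Prod.fst h)
  have hr : rootA Sᶜ f (Zset_nonempty (hfA' hA) hAne)
      = rootA Sᶜ f' (Zset_nonempty (hfA' hA') hAne') :=
    congrArg (Prod.fst ∘ Prod.snd) h
  have hm : markB Sᶜ f (Zset_nonempty (hfA' hA) hAne)
      = markB Sᶜ f' (Zset_nonempty (hfA' hA') hAne') :=
    congrArg (Prod.snd ∘ Prod.snd) h
  exact merged_inj hS hA hS' hA' hcard hAne hG hr hm hSagree

/-- adjacency inside `S` for the two-point configuration -/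
lemma encode_adj_S {S : Finset V} {f : V → V} {u v : V} (huv : u ≠ v)
    (hfu : f u = u) (hfv : f v = if u < v then u else v)
    (hSuv : S = {u, v}) :
    (graphOf (joyalP Sᶜ f)).Adj u v ↔ u < v := by
  have hu : u ∉ (Sᶜ : Finset V) := by simp [hSuv]
  have hv : v ∉ (Sᶜ : Finset V) := by simp [hSuv]
  have hpu : joyalP Sᶜ f u = u := by
    rw [joyalP_not_mem (fun hmem => hu (Zset_subset hmem)), hfu]
  have hpv : joyalP Sᶜ f v = f v :=
    joyalP_not_mem (fun hmem => hv (Zset_subset hmem))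
  constructor
  · rintro ⟨hne, h | h⟩
    · rw [hpu] at h; exact absurd h huv
    · rw [hpv, hfv] at h
      by_contra hlt
      rw [if_neg hlt] at h
      exact huv h.symm
  · intro hlt
    exact ⟨huv, Or.inr (by rw [hpv, hfv, if_pos hlt])⟩

/-- Data types for the three families. -/
abbrev D1 (V : Type*) [DecidableEq V] := Σ _v : V, {f : V → V // ∀ x, (x = _v → f x = x) ∧ (x ≠ _v → f x ≠ _v)}

abbrev D2 (V : Type*) [LinearOrder V] :=
  Σ q : {q : V × V // q.1 ≠ q.2},
    {f : V → V // f q.1.1 = q.1.1 ∧ f q.1.2 = (if q.1.1 < q.1.2 then q.1.1 else q.1.2) ∧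
      ∀ x, x ≠ q.1.1 → x ≠ q.1.2 → (f x ≠ q.1.1 ∧ f x ≠ q.1.2)}

variable (hV3 : 3 ≤ Fintype.card V)

include hV3 in
lemma compl_ne_card {S : Finset V} (h : S.card ≤ 2) : (Sᶜ : Finset V).Nonempty := by
  rw [← Finset.card_pos, Finset.card_compl]
  omega

/-- The master injection. -/
noncomputable def Phi (hV3 : 3 ≤ Fintype.card V) :
    ((V → V) ⊕ D1 V ⊕ D2 V) → ({G : SimpleGraph V // G.IsAcyclic} × V × V)
  | Sum.inl f => encode ∅ f (by simp) (by simp) (by simp) (compl_ne_card hV3 (by simp))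
  | Sum.inr (Sum.inl ⟨v, f, hf⟩) =>
      encode {v} f
        (by
          intro x hx
          rw [Finset.mem_singleton] at hx
          subst hx
          rw [(hf x).1 rfl]
          simp)
        (by
          intro x hx
          rw [Finset.mem_singleton] at hx ⊢
          exact (hf x).2 hx)
        (by simp)
        (compl_ne_card hV3 (by simp))
  | Sum.inr (Sum.inr ⟨⟨⟨u, v⟩, huv⟩, f, hfu, hfv, hf⟩) =>
      encode {u, v} f
        (by
          intro x hx
          rw [Finset.mem_insert, Finset.mem_singleton] at hx
          rcases hx with rfl | rfl
          · rw [hfu]; simp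
          · rw [hfv]
            constructor
            · split <;> simp
            · split
              · exact le_of_lt (by assumption)
              · exact le_rfl)
        (by
          intro x hx
          rw [Finset.mem_insert, Finset.mem_singleton] at hx ⊢
          push_neg at hx ⊢
          exact hf x hx.1 hx.2)
        (by
          refine le_trans (Finset.card_insert_le _ _) ?_
          simp)
        (compl_ne_card hV3 (by
          refine le_trans (Finset.card_insert_le _ _) ?_
          simp))

end TopLevel
section TopLevel2
open Function Finset SimpleGraph

variable {V : Type*} [Fintype V] [LinearOrder V]

lemma pair_card {u v : V} (h : u ≠ v) : ({u, v} : Finset V).card = 2 := by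
  rw [Finset.card_insert_of_notMem (by simp [h]), Finset.card_singleton]

lemma Phi_injective (hV3 : 3 ≤ Fintype.card V) : Function.Injective (Phi (V := V) hV3) := by
  intro d d' h
  rcases d with f | ⟨v, f, hf⟩ | ⟨⟨⟨u, v⟩, huv⟩, f, hfu, hfv, hf⟩ <;>
    rcases d' with g | ⟨v', g, hg⟩ | ⟨⟨⟨u', v'⟩, hu'v'⟩, g, hgu, hgv, hg⟩ <;>
      simp only [Phi] at h
  · -- inl/inl
    have := encode_f_eq h (by simp)
    rw [this]
  · exact absurd (congrArg Finset.card (encode_S_eq h)) (by simp)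
  · exact absurd (congrArg Finset.card (encode_S_eq h)) (by simp [pair_card hu'v'])
  · exact absurd (congrArg Finset.card (encode_S_eq h)) (by simp)
  · -- D1/D1
    have hvv : v = v' := Finset.singleton_injective (encode_S_eq h)
    subst hvv
    have hfg : f = g := encode_f_eq h (by
      intro x hx
      rw [Finset.mem_singleton] at hx
      subst hx
      rw [(hf x).1 rfl, (hg x).1 rfl])
    subst hfg
    rfl
  · exact absurd (congrArg Finset.card (encode_S_eq h)) (by simp [pair_card hu'v'])
  · exact absurd (congrArg Finset.card (encode_S_eq h)) (by simp [pair_card huv])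
  · exact absurd (congrArg Finset.card (encode_S_eq h)) (by simp [pair_card huv])
  · -- D2/D2
    have hSS : ({u, v} : Finset V) = {u', v'} := encode_S_eq h
    have hG : graphOf (joyalP ({u,v}ᶜ : Finset V) f) = graphOf (joyalP ({u',v'}ᶜ : Finset V) g) :=
      congrArg Subtype.val (congrArg Prod.fst h)
    have hadjf : (graphOf (joyalP ({u,v}ᶜ : Finset V) f)).Adj u v ↔ u < v :=
      encode_adj_S huv hfu hfv rfl
    have hadjg : (graphOf (joyalP ({u',v'}ᶜ : Finset V) g)).Adj u' v' ↔ u' < v' :=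
      encode_adj_S hu'v' hgu hgv rfl
    have huu : u = u' ∧ v = v' := by
      have hu1 : u ∈ ({u', v'} : Finset V) := by rw [← hSS]; simp
      have hv1 : v ∈ ({u', v'} : Finset V) := by rw [← hSS]; simp
      rw [Finset.mem_insert, Finset.mem_singleton] at hu1 hv1
      rcases hu1 with rfl | rfl
      · rcases hv1 with rfl | rfl
        · exact absurd rfl huv
        · exact ⟨rfl, rfl⟩
      · rcases hv1 with rfl | rfl
        · -- swapped case: u = v', v = u'
          exfalso
          have h1 : (graphOf (joyalP ({u,v}ᶜ : Finset V) f)).Adj u v ↔ v < u := by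
            rw [hG]
            constructor
            · intro hadj
              exact hadjg.1 hadj.symm
            · intro hlt
              exact (hadjg.2 hlt).symm
          rcases lt_or_gt_of_ne huv with hlt | hlt
          · exact absurd (h1.1 (hadjf.2 hlt)) (lt_asymm hlt)
          · exact absurd (hadjf.1 (h1.2 hlt)) (lt_asymm hlt)
        · exact absurd rfl huv
    obtain ⟨rfl, rfl⟩ := huu
    have hfg : f = g := encode_f_eq h (by
      intro x hx
      rw [Finset.mem_insert, Finset.mem_singleton] at hx
      rcases hx with rfl | rfl
      · rw [hfu, hgu]
      · rw [hfv, hgv])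
    subst hfg
    rfl

end TopLevel2
section Counting
open Function Finset

variable {V : Type*} [Fintype V] [LinearOrder V]

/-- Counting constrained functions. -/
noncomputable def restrictEquiv (S : Finset V) (r : V → V) :
    {f : V → V // (∀ x ∈ S, f x = r x) ∧ ∀ x ∉ S, f x ∉ S} ≃
      ({x : V // x ∉ S} → {x : V // x ∉ S}) where
  toFun f x := ⟨f.1 x.1, f.2.2 x.1 x.2⟩
  invFun g := ⟨fun x => if h : x ∈ S then r x else (g ⟨x, h⟩).1,
    ⟨fun x hx => dif_pos hx, fun x hx => by simp only [dif_neg hx]; exact (g ⟨x, hx⟩).2⟩⟩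
  left_inv f := by
    apply Subtype.ext
    funext x
    by_cases hx : x ∈ S
    · simp only [dif_pos hx]
      exact (f.2.1 x hx).symm
    · simp only [dif_neg hx]
  right_inv g := by
    funext x
    apply Subtype.ext
    simp only [dif_neg x.2]

lemma card_not_mem_subtype (S : Finset V) :
    Fintype.card {x : V // x ∉ S} = Fintype.card V - S.card := by
  have := Fintype.card_subtype_compl (fun x => x ∈ S)
  simpa [Fintype.card_coe] using this

lemma card_restrict (S : Finset V) (r : V → V) :
    Nat.card {f : V → V // (∀ x ∈ S, f x = r x) ∧ ∀ x ∉ S, f x ∉ S} =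
      (Fintype.card V - S.card) ^ (Fintype.card V - S.card) := by
  classical
  rw [Nat.card_eq_fintype_card, Fintype.card_congr (restrictEquiv S r),
    Fintype.card_fun, card_not_mem_subtype]

lemma card_D1 : Nat.card (D1 V) =
    Fintype.card V * (Fintype.card V - 1) ^ (Fintype.card V - 1) := by
  classical
  rw [Nat.card_eq_fintype_card]
  rw [Fintype.card_sigma]
  have hcongr : ∀ v : V, Fintype.card {f : V → V // ∀ x, (x = v → f x = x) ∧ (x ≠ v → f x ≠ v)} =
      (Fintype.card V - 1) ^ (Fintype.card V - 1) := by
    intro v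
    have he : {f : V → V // ∀ x, (x = v → f x = x) ∧ (x ≠ v → f x ≠ v)} ≃
        {f : V → V // (∀ x ∈ ({v} : Finset V), f x = id x) ∧
          ∀ x ∉ ({v} : Finset V), f x ∉ ({v} : Finset V)} := by
      apply Equiv.subtypeEquivRight
      intro f
      simp only [Finset.mem_singleton, id_eq]
      constructor
      · intro hf
        exact ⟨fun x hx => by rw [hx]; exact (hf v).1 rfl, fun x hx => (hf x).2 hx⟩
      · intro hf x
        exact ⟨fun hx => by rw [hx]; exact hf.1 v rfl, fun hx => hf.2 x hx⟩
    rw [Fintype.card_congr he, ← Nat.card_eq_fintype_card, card_restrict]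
    simp
  rw [Finset.sum_congr rfl (fun v _ => hcongr v), Finset.sum_const, smul_eq_mul,
    Finset.card_univ]

lemma card_offdiag : Nat.card {q : V × V // q.1 ≠ q.2} =
    Fintype.card V * (Fintype.card V - 1) := by
  classical
  rw [Nat.card_eq_fintype_card]
  have h1 : Fintype.card {q : V × V // q.1 = q.2} = Fintype.card V := by
    refine Fintype.card_congr ⟨fun q => q.1.1, fun v => ⟨(v, v), rfl⟩, ?_, ?_⟩
    · intro q
      apply Subtype.ext
      obtain ⟨⟨a, b⟩, hab⟩ := q
      simp only at hab
      subst hab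
      rfl
    · intro v; rfl
  have h2 := Fintype.card_subtype_compl (fun q : V × V => q.1 = q.2)
  have h3 : Fintype.card {q : V × V // q.1 ≠ q.2}
      = Fintype.card (V × V) - Fintype.card V := by
    rw [← h1]
    exact h2
  rw [h3, Fintype.card_prod, Nat.mul_sub_one]

lemma card_D2 : Nat.card (D2 V) =
    Fintype.card V * (Fintype.card V - 1) * (Fintype.card V - 2) ^ (Fintype.card V - 2) := by
  classical
  rw [Nat.card_eq_fintype_card]
  rw [Fintype.card_sigma]
  have hcongr : ∀ q : {q : V × V // q.1 ≠ q.2},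
      Fintype.card {f : V → V // f q.1.1 = q.1.1 ∧
        f q.1.2 = (if q.1.1 < q.1.2 then q.1.1 else q.1.2) ∧
        ∀ x, x ≠ q.1.1 → x ≠ q.1.2 → (f x ≠ q.1.1 ∧ f x ≠ q.1.2)} =
      (Fintype.card V - 2) ^ (Fintype.card V - 2) := by
    rintro ⟨⟨u, v⟩, huv⟩
    simp only at huv ⊢
    have he : {f : V → V // f u = u ∧ f v = (if u < v then u else v) ∧
        ∀ x, x ≠ u → x ≠ v → (f x ≠ u ∧ f x ≠ v)} ≃
        {f : V → V // (∀ x ∈ ({u, v} : Finset V),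
            f x = (fun y => if y = u then u else if u < v then u else v) x) ∧
          ∀ x ∉ ({u, v} : Finset V), f x ∉ ({u, v} : Finset V)} := by
      apply Equiv.subtypeEquivRight
      intro f
      simp only [Finset.mem_insert, Finset.mem_singleton]
      constructor
      · rintro ⟨h1, h2, h3⟩
        refine ⟨?_, ?_⟩
        · rintro x (rfl | rfl)
          · simpa using h1
          · rw [if_neg (Ne.symm huv)]
            exact h2
        · intro x hx
          push_neg at hx ⊢
          exact h3 x hx.1 hx.2
      · rintro ⟨h1, h2⟩
        refine ⟨by simpa using h1 u (Or.inl rfl), ?_, ?_⟩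
        · have := h1 v (Or.inr rfl)
          rwa [if_neg (Ne.symm huv)] at this
        · intro x hxu hxv
          have := h2 x (by push_neg; exact ⟨hxu, hxv⟩)
          push_neg at this
          exact this
    rw [Fintype.card_congr he, ← Nat.card_eq_fintype_card, card_restrict, pair_card huv]
  rw [Finset.sum_congr rfl (fun q _ => hcongr q), Finset.sum_const, smul_eq_mul,
    Finset.card_univ, ← Nat.card_eq_fintype_card, card_offdiag]

end Counting
section Analysis
open Real

lemma an1 (m : ℕ) (hm : 1 ≤ m) :
    Real.exp (-1) * ((m : ℝ) + 1) ^ m < (m : ℝ) ^ m := by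
  have hm0 : (0:ℝ) < m := by exact_mod_cast hm
  have h1 : Real.exp (-(1 / (m:ℝ))) < (m : ℝ) / ((m:ℝ) + 1) := by
    have h2 : (1 / (m:ℝ)) + 1 < Real.exp (1 / (m:ℝ)) :=
      Real.add_one_lt_exp (by positivity)
    have h3 : ((m:ℝ) + 1) / (m:ℝ) < Real.exp (1 / (m:ℝ)) := by
      rw [add_div]
      rw [div_self (ne_of_gt hm0)]
      linarith
    rw [Real.exp_neg]
    rw [inv_lt_comm₀ (Real.exp_pos _) (by positivity)]
    calc ((m:ℝ) / ((m:ℝ)+1))⁻¹ = ((m:ℝ)+1) / (m:ℝ) := by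
          rw [inv_div]
      _ < Real.exp (1 / (m:ℝ)) := h3
  have h4 : Real.exp (-(1 / (m:ℝ))) ^ m < ((m : ℝ) / ((m:ℝ) + 1)) ^ m :=
    pow_lt_pow_left₀ h1 (le_of_lt (Real.exp_pos _)) (by omega)
  have h5 : Real.exp (-(1 / (m:ℝ))) ^ m = Real.exp (-1) := by
    rw [← Real.exp_nat_mul]
    congr 1
    field_simp
  rw [h5, div_pow] at h4
  rw [lt_div_iff₀ (by positivity)] at h4
  calc Real.exp (-1) * ((m:ℝ)+1)^m = Real.exp (-1) * ((m:ℝ)+1)^m := rfl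
    _ < (m:ℝ)^m := h4
lemma cube (t : ℝ) (ht : 0 < t) (ht2 : t ≤ 1/2) :
    Real.exp (-(t + t^2/2 + t^3)) < 1 - t := by
  set u := t + t^2/2 + t^3 with hu
  have hu0 : 0 ≤ u := by positivity
  have hq : 1 + u + u^2/2 ≤ Real.exp u := Real.quadratic_le_exp_of_nonneg hu0
  have hkey : (1 - t) * Real.exp u > 1 := by
    have hfact : (1-t)*(1+u+u^2/2) - 1 = t^3*(1/2 - 3/8*t - 5/8*t^2 - t^4/2) := by
      rw [hu]; ring
    have h2 : t^2 ≤ 1/4 := by nlinarith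
    have h4 : t^4 ≤ 1/16 := by nlinarith [sq_nonneg (t^2 - 1/4)]
    have hpos : (0:ℝ) < 1/2 - 3/8*t - 5/8*t^2 - t^4/2 := by linarith
    have hpoly : (1 - t) * (1 + u + u^2/2) > 1 := by
      have := mul_pos (pow_pos ht 3) hpos
      linarith [hfact]
    have hle : (1 - t) * (1 + u + u^2/2) ≤ (1 - t) * Real.exp u :=
      mul_le_mul_of_nonneg_left hq (by linarith)
    linarith
  rw [Real.exp_neg, ← one_div, div_lt_iff₀ (Real.exp_pos u)]
  nlinarith [hkey, Real.exp_pos u, ht2]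
end Analysis
section Analysis2
open Real

lemma exp_two_gt : (7.389 : ℝ) < Real.exp 2 := by
  have h : Real.exp 2 = Real.exp 1 * Real.exp 1 := by
    rw [← Real.exp_add]; norm_num
  have := Real.exp_one_gt_d9
  nlinarith

lemma an2 (m : ℕ) (hm : 1 ≤ m) :
    Real.exp (-2) * ((m : ℝ) + 2) ^ (m + 1) < ((m : ℝ) + 1) * (m : ℝ) ^ m := by
  rcases eq_or_lt_of_le hm with rfl1 | hm2
  · -- m = 1
    have hm1 : m = 1 := rfl1.symm
    subst hm1
    simp only [pow_one, Nat.cast_one]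
    norm_num
    have h2 := exp_two_gt
    have hpos := Real.exp_pos (2:ℝ)
    rw [Real.exp_neg]
    rw [inv_mul_lt_iff₀ hpos]
    nlinarith
  · -- m ≥ 2
    have hm2' : 2 ≤ m := hm2
    set N : ℝ := (m : ℝ) + 2 with hN
    have hN4 : (4:ℝ) ≤ N := by
      have : (2:ℝ) ≤ (m:ℝ) := by exact_mod_cast hm2'
      rw [hN]; linarith
    have hN0 : (0:ℝ) < N := by linarith
    have ht1 : (0:ℝ) < 2/N := by positivity
    have ht1b : 2/N ≤ 1/2 := by
      rw [div_le_div_iff₀ hN0 (by norm_num)]; linarith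
    have ht2 : (0:ℝ) < 1/N := by positivity
    have ht2b : 1/N ≤ 1/2 := by
      rw [div_le_div_iff₀ hN0 (by norm_num)]; linarith
    have hc1 := cube (2/N) ht1 ht1b
    have hc2 := cube (1/N) ht2 ht2b
    set β : ℝ := 2/N + (2/N)^2/2 + (2/N)^3 with hβ
    set α : ℝ := 1/N + (1/N)^2/2 + (1/N)^3 with hα
    have he1 : 1 - 2/N = (m:ℝ)/N := by
      rw [hN]; field_simp; ring
    have he2 : 1 - 1/N = ((m:ℝ)+1)/N := by
      rw [hN]; field_simp; ring
    rw [he1] at hc1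
    rw [he2] at hc2
    -- raise hc1 to the m-th power
    have hp1 : Real.exp (-β) ^ m < ((m:ℝ)/N) ^ m :=
      pow_lt_pow_left₀ hc1 (le_of_lt (Real.exp_pos _)) (by omega)
    have hp2 : Real.exp (-β) ^ m = Real.exp (-((m:ℝ) * β)) := by
      rw [← Real.exp_nat_mul]
      congr 1
      ring
    rw [hp2] at hp1
    have hprod : Real.exp (-α) * Real.exp (-((m:ℝ) * β)) <
        (((m:ℝ)+1)/N) * (((m:ℝ)/N) ^ m) := by
      apply mul_lt_mul'' hc2 hp1 (le_of_lt (Real.exp_pos _)) (le_of_lt (Real.exp_pos _))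
    rw [← Real.exp_add] at hprod
    have hsum : α + (m:ℝ) * β ≤ 2 := by
      have hMN : (m:ℝ) = N - 2 := by rw [hN]; ring
      rw [hα, hβ, hMN]
      rw [← sub_nonneg]
      have key : 2 - ((1/N + (1/N)^2/2 + (1/N)^3) + (N-2) * (2/N + (2/N)^2/2 + (2/N)^3))
          = (N^2 - 4.5*N + 15)/N^3 := by
        field_simp
        ring
      rw [key]
      apply div_nonneg _ (by positivity)
      nlinarith [sq_nonneg (N - 2.25)]
    have hexp : Real.exp (-2) ≤ Real.exp (-α + -((m:ℝ) * β)) := by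
      apply Real.exp_le_exp.2
      linarith
    have hfinal : Real.exp (-2) < (((m:ℝ)+1)/N) * (((m:ℝ)/N) ^ m) :=
      lt_of_le_of_lt hexp hprod
    have hre : (((m:ℝ)+1)/N) * (((m:ℝ)/N) ^ m) = (((m:ℝ)+1) * (m:ℝ)^m) / N^(m+1) := by
      rw [div_pow, div_mul_div_comm, pow_succ]
      ring
    rw [hre, lt_div_iff₀ (by positivity)] at hfinal
    calc Real.exp (-2) * ((m : ℝ) + 2) ^ (m + 1) = Real.exp (-2) * N^(m+1) := by rw [hN]
      _ < ((m : ℝ) + 1) * (m:ℝ)^m := hfinal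
end Analysis2
section MainCount
open Function Finset

variable {V : Type*} [Fintype V] [LinearOrder V]

theorem main_count (hV3 : 3 ≤ Fintype.card V) :
    Fintype.card V ^ Fintype.card V
      + Fintype.card V * (Fintype.card V - 1) ^ (Fintype.card V - 1)
      + Fintype.card V * (Fintype.card V - 1) * (Fintype.card V - 2) ^ (Fintype.card V - 2)
    ≤ Nat.card {G : SimpleGraph V // G.IsAcyclic} * (Fintype.card V * Fintype.card V) := by
  classical
  have hle := Nat.card_le_card_of_injective _ (Phi_injective hV3)
  rw [Nat.card_sum, Nat.card_sum, Nat.card_prod, Nat.card_prod] at hle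
  rw [Nat.card_eq_fintype_card (α := V → V), Fintype.card_fun] at hle
  rw [card_D1, card_D2, Nat.card_eq_fintype_card (α := V)] at hle
  omega

end MainCount

section Final
open Real

theorem forestCount_eq (n : ℕ) :
    {F : SimpleGraph (Fin n) | F.IsAcyclic}.ncard
      = Nat.card {F : SimpleGraph (Fin n) // F.IsAcyclic} :=
  (Nat.card_coe_set_eq _).symm

theorem count_ge (n : ℕ) (hn : 3 ≤ n) :
    n ^ n + n * (n - 1) ^ (n - 1) + n * (n - 1) * (n - 2) ^ (n - 2)
      ≤ ({F : SimpleGraph (Fin n) | F.IsAcyclic}.ncard) * (n * n) := by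
  have := main_count (V := Fin n) (by simpa using hn)
  simpa [forestCount_eq, Fintype.card_fin] using this

end Final
/-- The number of forests on vertex set `{1,…,n}`. -/
noncomputable def forestCount (n : ℕ) : ℕ :=
  {F : SimpleGraph (Fin n) | F.IsAcyclic}.ncard

section FinalAssembly
open Real

lemma exp_neg_one_lt : Real.exp (-1) < 0.37 := by
  rw [Real.exp_neg]
  rw [inv_lt_comm₀ (Real.exp_pos _) (by norm_num)]
  have := Real.exp_one_gt_d9
  nlinarith

lemma exp_neg_two_lt : Real.exp (-2) < 0.14 := by
  rw [Real.exp_neg]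
  rw [inv_lt_comm₀ (Real.exp_pos _) (by norm_num)]
  have := exp_two_gt
  nlinarith

lemma forestCount_two : 2 ≤ forestCount 2 := by
  classical
  have hG : (graphOf (fun _ => (0 : Fin 2))).IsAcyclic := by
    exact graphOf_isAcyclic (V := Fin 2) (fun x => (x : ℕ)) (by decide)
  have hne : (⊥ : SimpleGraph (Fin 2)) ≠ graphOf (fun _ => (0 : Fin 2)) := by
    intro h
    have h01 : (graphOf (fun _ => (0 : Fin 2))).Adj 1 0 := ⟨by decide, Or.inl rfl⟩
    rw [← h] at h01
    exact h01.ne (by simpa using h01)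
  have hsub : ({⊥, graphOf (fun _ => (0 : Fin 2))} : Set (SimpleGraph (Fin 2)))
      ⊆ {F : SimpleGraph (Fin 2) | F.IsAcyclic} := by
    intro F hF
    rcases hF with rfl | rfl
    · exact SimpleGraph.isAcyclic_bot
    · exact hG
  have h2 : ({⊥, graphOf (fun _ => (0 : Fin 2))} : Set (SimpleGraph (Fin 2))).ncard = 2 :=
    Set.ncard_pair hne
  have := Set.ncard_le_ncard hsub (Set.toFinite _)
  rw [h2] at this
  exact this

theorem forestCount_gt (n : ℕ) (hn : 2 ≤ n) :
    (forestCount n : ℝ)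
      > (n : ℝ) ^ (n - 2) * (1 + Real.exp (-1) + Real.exp (-2)) := by
  rcases eq_or_lt_of_le hn with h2 | h3
  · -- n = 2
    subst h2
    have hc : (forestCount 2 : ℝ) ≥ 2 := by exact_mod_cast forestCount_two
    have h1 := exp_neg_one_lt
    have h2' := exp_neg_two_lt
    norm_num
    nlinarith
  · -- n ≥ 3
    have hn3 : 3 ≤ n := h3
    obtain ⟨m, rfl⟩ : ∃ m, n = m + 2 := ⟨n - 2, by omega⟩
    have hm : 1 ≤ m := by omega
    have hcount := count_ge (m + 2) hn3
    rw [show m + 2 - 2 = m by omega] at hcount ⊢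
    -- cast to ℝ
    have hcountR : ((m:ℝ) + 2) ^ (m + 2) + ((m:ℝ) + 2) * ((m:ℝ) + 1) ^ (m + 1)
        + ((m:ℝ) + 2) * ((m:ℝ) + 1) * (m:ℝ) ^ m
        ≤ (forestCount (m + 2) : ℝ) * (((m:ℝ) + 2) * ((m:ℝ) + 2)) := by
      have := hcount
      have hcast : ((m + 2 : ℕ) : ℝ) = (m : ℝ) + 2 := by push_cast; ring
      calc ((m:ℝ) + 2) ^ (m + 2) + ((m:ℝ) + 2) * ((m:ℝ) + 1) ^ (m + 1)
            + ((m:ℝ) + 2) * ((m:ℝ) + 1) * (m:ℝ) ^ m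
          = (((m+2) ^ (m+2) + (m+2) * (m+1) ^ (m+1) + (m+2) * (m+1) * m ^ m : ℕ) : ℝ) := by
            push_cast; ring
        _ ≤ ((forestCount (m+2) * ((m+2) * (m+2)) : ℕ) : ℝ) := by exact_mod_cast this
        _ = (forestCount (m + 2) : ℝ) * (((m:ℝ) + 2) * ((m:ℝ) + 2)) := by push_cast; ring
    -- analytic lower bounds
    have ha1 : Real.exp (-1) * ((m:ℝ) + 2) ^ (m + 2) < ((m:ℝ) + 2) * ((m:ℝ) + 1) ^ (m + 1) := by
      have := an1 (m + 1) (by omega)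
      have h' : Real.exp (-1) * (((m:ℝ)+1) + 1) ^ (m+1) < ((m:ℝ)+1) ^ (m+1) := by
        exact_mod_cast this
      have hpos : (0:ℝ) < (m:ℝ) + 2 := by positivity
      calc Real.exp (-1) * ((m:ℝ) + 2) ^ (m + 2)
          = ((m:ℝ) + 2) * (Real.exp (-1) * (((m:ℝ)+1) + 1) ^ (m+1)) := by ring_nf
        _ < ((m:ℝ) + 2) * ((m:ℝ)+1) ^ (m+1) := by
            exact mul_lt_mul_of_pos_left h' hpos
    have ha2 : Real.exp (-2) * ((m:ℝ) + 2) ^ (m + 2) <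
        ((m:ℝ) + 2) * ((m:ℝ) + 1) * (m:ℝ) ^ m := by
      have h' := an2 m hm
      have hpos : (0:ℝ) < (m:ℝ) + 2 := by positivity
      calc Real.exp (-2) * ((m:ℝ) + 2) ^ (m + 2)
          = ((m:ℝ) + 2) * (Real.exp (-2) * ((m:ℝ) + 2) ^ (m+1)) := by ring_nf
        _ < ((m:ℝ) + 2) * (((m:ℝ)+1) * (m:ℝ) ^ m) := mul_lt_mul_of_pos_left h' hpos
        _ = ((m:ℝ) + 2) * ((m:ℝ) + 1) * (m:ℝ) ^ m := by ring
    -- combine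
    have hKg : ((m:ℝ) + 2) ^ (m + 2) * (1 + Real.exp (-1) + Real.exp (-2))
        < (forestCount (m + 2) : ℝ) * (((m:ℝ) + 2) * ((m:ℝ) + 2)) := by
      nlinarith [hcountR, ha1, ha2]
    have hexp : ((m:ℝ) + 2) ^ (m + 2) = ((m:ℝ) + 2) ^ m * (((m:ℝ)+2) * ((m:ℝ)+2)) := by
      rw [pow_succ, pow_succ]
      ring
    rw [hexp] at hKg
    have hpos2 : (0:ℝ) < ((m:ℝ)+2) * ((m:ℝ)+2) := by positivity
    have hcast2 : ((m + 2 : ℕ) : ℝ) = (m:ℝ) + 2 := by push_cast; ring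
    rw [gt_iff_lt, hcast2]
    have := (mul_lt_mul_iff_left₀ hpos2).1 (by
      calc ((m:ℝ) + 2) ^ m * (1 + Real.exp (-1) + Real.exp (-2)) * (((m:ℝ)+2) * ((m:ℝ)+2))
          = ((m:ℝ) + 2) ^ m * (((m:ℝ)+2) * ((m:ℝ)+2)) * (1 + Real.exp (-1) + Real.exp (-2)) := by
            ring
        _ < (forestCount (m + 2) : ℝ) * (((m:ℝ) + 2) * ((m:ℝ) + 2)) := hKg)
    exact this

end FinalAssembly
end
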